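/- With the tensor-product kernel setup of the Leibnitz rule, ⟨x ⊗ ω', ω ⊗ y⟩ = 0, i.e. the images of the two factors in the index of the tensor product system are orthogonal. -/
import Mathlib


open scoped TensorProduct

/-- With the tensor kernel given by the Leibnitz rule, the images of the two factors are
orthogonal in the index of the tensor product system: `⟨x ⊗ ω', ω ⊗ y⟩ = 0`. -/
theorem tensor_factors_orthogonal
    {A B SA SB : Type*} [CStarAlgebra A] [CStarAlgebra B]
    (ω : SA) (ω' : SB)
    (LA : SA → SA → A → A) (LB : SB → SB → B → B)
    (LT : SA × SB → SA × SB → (A ⊗[ℂ] B) → (A ⊗[ℂ] B))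
    (hLeibnitz : ∀ (x y : SA) (x' y' : SB) (a : A) (b : B),
      LT (x, x') (y, y') (a ⊗ₜ[ℂ] b) = a ⊗ₜ[ℂ] LB x' y' b + LA x y a ⊗ₜ[ℂ] b) :
    ∀ (x : SA) (y : SB),
      (LT (x, ω') (ω, y) (1 ⊗ₜ[ℂ] 1) - LT (x, ω') (ω, ω') (1 ⊗ₜ[ℂ] 1)
        - LT (ω, ω') (ω, y) (1 ⊗ₜ[ℂ] 1) + LT (ω, ω') (ω, ω') (1 ⊗ₜ[ℂ] 1)) = 0 := by
  intro x y
  simp only [hLeibnitz]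
  abel
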